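/- arXiv:2011.09702 — 5 statements merged into one kernel-verified Lean document; each statement's English description precedes it below -/
import Mathlib

section
/- Suppose (curl π)_{ab} = 0 at all times (where its time derivative also vanishes), the commutation relation h^a{}_c h^b{}_d [ε^{ef⟨c} D_e A^{d⟩}{}_f]˙ = ε^{dc⟨a} D_c Ȧ^{⟨b⟩e⟩} h_{de} − (Θ/3) ε^{cd⟨a} D_c A^{b⟩}{}_d holds for first-order tensors, the anisotropic stress evolves as π̇^{⟨ab⟩} + D^{⟨a} q^{b⟩} = −(μ+p) σ^{ab} − (Θ/3) π^{ab}, and curl(D_{⟨a} q_{b⟩}) = 0. If the weak energy condition μ + p > 0 holds, then (curl σ)_{ab} = 0. -/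
/-- Proposition 1: If `curl π = 0` at all times (so its time
derivative, computed via the commutation relation
`(curl π)˙ = curl π̇ − (Θ/3) curl π`, also vanishes), the anisotropic stress
evolves as `π̇ + D⟨a q b⟩ = −(μ+p) σ − (Θ/3) π`, and `curl(D⟨a q b⟩) = 0`,
then the weak energy condition `μ + p > 0` forces `curl σ = 0`. -/
theorem curl_shear_vanishes
    {T : Type*} [AddCommGroup T] [Module ℝ T] [NoZeroSMulDivisors ℝ T]
    (curl : T →ₗ[ℝ] T)
    (π πdot σ Dq : T)          -- Dq represents D^{⟨a} q^{b⟩}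
    (curlπdot_total : T)       -- represents (curl π)˙
    (μ p Θ : ℝ)
    (hwec : μ + p > 0)
    (hπ : curl π = 0)
    (hcomm : curlπdot_total = curl πdot - (Θ/3) • curl π)
    (hprop : curlπdot_total = 0)
    (hevol : πdot + Dq = (-(μ + p)) • σ - (Θ/3) • π)
    (hDq : curl Dq = 0) :
    curl σ = 0 := by
  have hπdot : curl πdot = 0 := by
    have := hcomm.symm.trans hprop
    simpa [hπ] using this
  have h := congrArg curl hevol
  simp only [map_add, map_sub, map_smul, hπ, hπdot, hDq, smul_zero, add_zero, sub_zero] at h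
  have h2 : (-(μ + p)) • curl σ = 0 := h.symm
  rcases smul_eq_zero.mp h2 with h | h
  · nlinarith
  · exact h
end

section
/- Assume: (i) the constraint (1/2) D_b π^{ab} − (1/3) D^a μ + (1/3) Θ q^a = 0; (ii) D^b (curl π)_{ab} = (1/2) curl(D^b π_{ab}) and curl π = 0; (iii) curl(D^a μ) = 2 ω^a μ̇; (iv) (curl q)^a = −2(μ+p) ω^a; (v) the energy evolution μ̇ + D_a q^a = −Θ(μ + p); and (vi) ω^a ≠ 0 with Θ ≠ 0. Then D_a q^a = 0, i.e. the heat flux is divergence-free. -/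
/-- Proposition 2, part 1: under the constraint (C4), vanishing of
`curl π`, the commutation identity for the curl of a gradient, the
vorticity–heat-flux constraint, the energy evolution equation, and nonvanishing
vorticity and expansion, the heat flux is divergence-free: `D_a q^a = 0`. -/
theorem heat_flux_divergence_free
    {Vec : Type*} [AddCommGroup Vec] [Module ℝ Vec] [NoZeroSMulDivisors ℝ Vec]
    (curl : Vec →ₗ[ℝ] Vec)
    (divπ Dμ q ω : Vec)        -- divπ = D_b π^{ab},  Dμ = D^a μ
    (μ p Θ μdot divq : ℝ)
    (hC4 : (1/2 : ℝ) • divπ - (1/3 : ℝ) • Dμ + (Θ/3) • q = 0)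
    (hcurlπ : curl divπ = 0)   -- D^b(curl π)_{ab} = (1/2) curl(D^b π_{ab}) and curl π = 0
    (hDμ : curl Dμ = (2 * μdot) • ω)
    (hq : curl q = (-2 * (μ + p)) • ω)
    (henergy : μdot + divq = -Θ * (μ + p))
    (hω : ω ≠ 0) (hΘ : Θ ≠ 0) :
    divq = 0 := by
  have h := congrArg curl hC4
  rw [map_add, map_sub, map_smul, map_smul, map_smul, hcurlπ, hDμ, hq, map_zero,
    smul_zero, smul_smul, smul_smul, zero_sub, neg_add_eq_zero] at h
  have h2 : ((1/3 : ℝ) * (2 * μdot) - Θ/3 * (-2 * (μ + p))) • ω = 0 := by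
    rw [sub_smul, h, sub_self]
  have h3 := (smul_eq_zero.mp h2).resolve_right hω
  have : μdot = -Θ * (μ + p) := by linarith [h3]
  linarith
end

section
/- Assume (μ+p) ω^a = −(1/2) ε^{abc} D_b q_c (constraint C5), the identity (curl curl q)^a = −D² q^a + D_a(D^b q_b) + (2/3)(μ − Θ²/3) q^a, and D_a q^a = 0. Then (μ+p)(curl ω)^a = (1/2) D² q^a − (1/3)(μ − Θ²/3) q^a. -/
/-- STATEMENT 5 (Proposition 3, second claim): from the constraint (C5)
`(μ+p) ω = −(1/2) curl q`, the double-curl identity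
`curl curl q = −D² q + D(div q) + (2/3)(μ − Θ²/3) q`, and `div q = 0`, it follows
that `(μ+p)(curl ω) = (1/2) D² q − (1/3)(μ − Θ²/3) q`. -/
theorem curl_vorticity_from_heat_flux
    {Vec : Type*} [AddCommGroup Vec] [Module ℝ Vec]
    (curl D2 : Vec →ₗ[ℝ] Vec)
    (div : Vec →ₗ[ℝ] ℝ) (grad : ℝ →ₗ[ℝ] Vec)
    (q ω : Vec) (μ p Θ : ℝ)
    (hC5 : (μ + p) • ω = (-(1/2) : ℝ) • curl q)
    (hid : curl (curl q) = -(D2 q) + grad (div q) + ((2/3) * (μ - Θ^2/3)) • q)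
    (hdivq : div q = 0) :
    (μ + p) • curl ω = (1/2 : ℝ) • D2 q - ((1/3) * (μ - Θ^2/3)) • q := by
  have h : (μ + p) • curl ω = (-(1/2) : ℝ) • curl (curl q) := by
    rw [← map_smul, hC5, map_smul]
  rw [h, hid, hdivq, map_zero, smul_add, smul_add, smul_smul, smul_neg]
  rw [sub_eq_add_neg]
  ring_nf
  module
end

section
/- Assume the linearized evolution equations with vector perturbations neglected: σ̇^{⟨ab⟩} = (1/2) π^{ab} − (2/3) Θ σ^{ab}; π̇^{⟨ab⟩} = −(μ+p) σ^{ab} − (Θ/3) π^{ab}; and the Raychaudhuri equation Θ̇ = −(1/3)Θ² − (1/2)(μ + 3p). Then σ̈^{⟨ab⟩} = −(1/6)(μ − 3p) σ^{ab} − Θ σ̇^{⟨ab⟩}. -/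
/-- STATEMENT 8 (equation (sw2)): from the linearized evolution equations with
vector perturbations neglected, `σ̇ = (1/2)π − (2/3)Θσ`,
`π̇ = −(μ+p)σ − (Θ/3)π`, and the Raychaudhuri equation
`Θ̇ = −(1/3)Θ² − (1/2)(μ + 3p)`, it follows that
`σ̈ = −(1/6)(μ − 3p)σ − Θσ̇`. -/
theorem shear_second_time_derivative
    {V : Type*} [NormedAddCommGroup V] [NormedSpace ℝ V]
    (σ σd σdd π πd : ℝ → V) (Θ Θd μ p : ℝ → ℝ)
    (hσ : ∀ t, HasDerivAt σ (σd t) t)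
    (hσd : ∀ t, HasDerivAt σd (σdd t) t)
    (hπ : ∀ t, HasDerivAt π (πd t) t)
    (hΘ : ∀ t, HasDerivAt Θ (Θd t) t)
    (hshear : ∀ t, σd t = (1/2 : ℝ) • π t - ((2/3) * Θ t) • σ t)
    (hπev : ∀ t, πd t = (-(μ t + p t)) • σ t - (Θ t / 3) • π t)
    (hray : ∀ t, Θd t = -(1/3) * (Θ t)^2 - (1/2) * (μ t + 3 * p t)) :
    ∀ t, σdd t = (-(1/6) * (μ t - 3 * p t)) • σ t - (Θ t) • σd t := by
  intro t
  have hfun : σd = fun s => (1/2 : ℝ) • π s - ((2/3) * Θ s) • σ s := funext hshear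
  have h1 : HasDerivAt (fun s => (1/2 : ℝ) • π s - ((2/3) * Θ s) • σ s)
      ((1/2 : ℝ) • πd t - (((2/3) * Θ t) • σd t + ((2/3) * Θd t) • σ t)) t := by
    exact ((hπ t).const_smul (1/2 : ℝ)).sub
      (((hΘ t).const_mul (2/3 : ℝ)).smul (hσ t))
  rw [← hfun] at h1
  have heq : σdd t = (1/2 : ℝ) • πd t - (((2/3) * Θ t) • σd t + ((2/3) * Θd t) • σ t) :=
    (hσd t).unique h1
  rw [heq, hπev t, hray t, hshear t]
  match_scalars <;> ring
end

section
/- Assume: (i) D^b (curl σ)_{ab} = (1/2) curl(D^b σ_{ab}) and curl σ = 0; (ii) the constraint D_b σ^{ab} − (2/3) D^a Θ + ε^{abc} D_b ω_c + q^a = 0; (iii) curl(D^aΘ) = 2 ω^a Θ̇, where Θ̇ = −(1/3)Θ² − (1/2)(μ+3p); (iv) (curl curl ω)_a = −D² ω_a + D_a(D^b ω_b) + (2/3)(μ − Θ²/3) ω_a with D_b ω^b = 0; (v) (curl q)_a = −2(μ+p) ω_a. Then D² ω^a = ((2/9)Θ² − (2/3)μ) ω^a. -/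
/-- STATEMENT 10 (equation (38)): from `curl σ = 0` together with
`D^b(curl σ)_{ab} = (1/2) curl(D^b σ_{ab})`, the constraint (C1)
`D_b σ^{ab} − (2/3)D^aΘ + ε^{abc}D_bω_c + q^a = 0`, the commutation
`curl(D^aΘ) = 2Θ̇ ω^a` with the Raychaudhuri equation, the double-curl identity
for the vorticity with `D_b ω^b = 0`, and `curl q = −2(μ+p)ω`, it follows that
`D²ω = ((2/9)Θ² − (2/3)μ) ω`. -/
theorem vorticity_laplacian_identity
    {T Vec : Type*} [AddCommGroup T] [Module ℝ T]
    [AddCommGroup Vec] [Module ℝ Vec]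
    (curlT : T →ₗ[ℝ] T) (divT : T →ₗ[ℝ] Vec)
    (curl D2 : Vec →ₗ[ℝ] Vec)
    (div : Vec →ₗ[ℝ] ℝ) (grad : ℝ →ₗ[ℝ] Vec)
    (σ : T) (ω q DΘ : Vec) (μ p Θ Θd : ℝ)
    (hcurlσ : curlT σ = 0)
    (hcomm : divT (curlT σ) = (1/2 : ℝ) • curl (divT σ))
    (hC1 : divT σ - (2/3 : ℝ) • DΘ + curl ω + q = 0)
    (hDΘ : curl DΘ = (2 * Θd) • ω)
    (hray : Θd = -(1/3) * Θ^2 - (1/2) * (μ + 3 * p))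
    (hcc : curl (curl ω) = -(D2 ω) + grad (div ω) + ((2/3) * (μ - Θ^2/3)) • ω)
    (hdivω : div ω = 0)
    (hq : curl q = (-2 * (μ + p)) • ω) :
    D2 ω = ((2/9) * Θ^2 - (2/3) * μ) • ω := by
  have h0 : curl (divT σ) = 0 := by
    have h := hcomm
    rw [hcurlσ, map_zero] at h
    have := h.symm
    rcases smul_eq_zero.mp this with h' | h'
    · norm_num at h'
    · exact h'
  have key := congrArg curl hC1
  simp only [map_add, map_sub, map_smul, map_zero] at key
  rw [h0, hDΘ, hcc, hq, hdivω, map_zero, hray] at key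
  linear_combination (norm := module) -key
end
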